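/- For the metric dl² = dr² + c²r²/(c² − ω²r²) dφ² + dz², the Riemann curvature component R_{rφrφ} equals −3c⁴ω²r²/(c² − ω²r²)³. -/

import Mathlib

/-- g_φφ component of the spatial metric. -/
noncomputable def gphiphi (c ω : ℝ) : ℝ → ℝ := fun r => c^2 * r^2 / (c^2 - ω^2 * r^2)

/-- Christoffel symbol Γ^r_{φφ} = −½ g^{rr} ∂_r g_φφ (with g^{rr} = 1). -/
noncomputable def GammaRphiphi (c ω : ℝ) : ℝ → ℝ := fun r => -(1/2) * deriv (gphiphi c ω) r

/-- Christoffel symbol Γ^φ_{rφ} = ½ g^{φφ} ∂_r g_φφ. -/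
noncomputable def GammaPhiRphi (c ω : ℝ) : ℝ → ℝ :=
  fun r => deriv (gphiphi c ω) r / (2 * gphiphi c ω r)

/-! With `D = c² − ω²r²` one finds `∂_r g_φφ = 2c⁴r/D²`, hence `Γ^r_{φφ} = −c⁴r/D²` and
`Γ^φ_{rφ} = c²/(rD)`. Differentiating once more, `∂_r Γ^r_{φφ} = −c⁴(c² + 3ω²r²)/D³`, while
`Γ^r_{φφ} Γ^φ_{rφ} = −c⁶/D³`; the `c⁶` terms cancel and leave `−3c⁴ω²r²/D³`. -/

lemma hasDerivAt_sq_sub_mul_sq (c ω x : ℝ) :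
    HasDerivAt (fun y : ℝ => c^2 - ω^2 * y^2) (-(2 * ω^2 * x)) x := by
  simpa [mul_comm, mul_left_comm] using ((hasDerivAt_pow 2 x).const_mul (ω^2)).const_sub (c^2)

lemma hasDerivAt_gphiphi {c ω x : ℝ} (hx : c^2 - ω^2 * x^2 ≠ 0) :
    HasDerivAt (gphiphi c ω) (2 * c^4 * x / (c^2 - ω^2 * x^2)^2) x := by
  have hnum : HasDerivAt (fun y : ℝ => c^2 * y^2) (2 * c^2 * x) x := by
    simpa [mul_comm, mul_left_comm] using (hasDerivAt_pow 2 x).const_mul (c^2)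
  refine (hnum.fun_div (hasDerivAt_sq_sub_mul_sq c ω x) hx).congr_deriv ?_
  field_simp
  ring

lemma GammaRphiphi_eq {c ω x : ℝ} (hx : c^2 - ω^2 * x^2 ≠ 0) :
    GammaRphiphi c ω x = -(c^4 * x) / (c^2 - ω^2 * x^2)^2 := by
  rw [GammaRphiphi, (hasDerivAt_gphiphi hx).deriv]
  ring

lemma GammaPhiRphi_eq {c ω x : ℝ} (hc : c ≠ 0) (hx₀ : x ≠ 0) (hx : c^2 - ω^2 * x^2 ≠ 0) :
    GammaPhiRphi c ω x = c^2 / (x * (c^2 - ω^2 * x^2)) := by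
  rw [GammaPhiRphi, (hasDerivAt_gphiphi hx).deriv, gphiphi]
  field_simp

lemma hasDerivAt_GammaRphiphi {c ω x : ℝ} (hx : c^2 - ω^2 * x^2 ≠ 0) :
    HasDerivAt (GammaRphiphi c ω)
      (-(c^4 * (c^2 + 3 * ω^2 * x^2)) / (c^2 - ω^2 * x^2)^3) x := by
  have hnear : GammaRphiphi c ω =ᶠ[nhds x] fun y => -(c^4 * y) / (c^2 - ω^2 * y^2)^2 := by
    filter_upwards [(hasDerivAt_sq_sub_mul_sq c ω x).continuousAt.eventually_ne hx]
      with y hy using GammaRphiphi_eq hy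
  have hnum : HasDerivAt (fun y : ℝ => -(c^4 * y)) (-(c^4)) x := by
    simpa using ((hasDerivAt_id x).const_mul (c^4)).fun_neg
  have hquot := hnum.fun_div ((hasDerivAt_sq_sub_mul_sq c ω x).fun_pow 2) (pow_ne_zero 2 hx)
  refine (hquot.congr_of_eventuallyEq hnear).congr_deriv ?_
  field_simp
  ring

/-- For this diagonal metric all other terms of `R^r_{φrφ}` vanish, leaving
`R_{rφrφ} = ∂_r Γ^r_{φφ} − Γ^r_{φφ} Γ^φ_{φr}`. -/
theorem riemann_rphirphi (c ω r : ℝ) (hc : 0 < c) (hω : 0 < ω)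
    (hr : 0 < r) (hr' : r < c / ω) :
    deriv (GammaRphiphi c ω) r - GammaRphiphi c ω r * GammaPhiRphi c ω r
      = -(3 * c^4 * ω^2 * r^2) / (c^2 - ω^2 * r^2)^3 := by
  have hωr : ω * r < c := by rwa [lt_div_iff₀ hω, mul_comm] at hr'
  have hD : c^2 - ω^2 * r^2 ≠ 0 := (by nlinarith [mul_pos hω hr] : 0 < c^2 - ω^2 * r^2).ne'
  rw [(hasDerivAt_GammaRphiphi hD).deriv, GammaRphiphi_eq hD,
    GammaPhiRphi_eq hc.ne' hr.ne' hD]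
  field_simp
  ring
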